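/- arXiv:2212.09055 — 2 statements merged into one kernel-verified Lean document; each statement's English description precedes it below -/
import Mathlib

section
/- For any finite non-abelian group G, f(G) ≥ 1 + 4/|G|, i.e. S(G) ≥ |G| + 4. -/
/-!
Sorting the elements of `G` by the cyclic subgroup they generate, a cyclic subgroup `H` receives
exactly its generators, and there are `φ |H|` of them, which is also `|Aut H|`; so the cyclic
subgroups alone contribute at least `|G|` to `S G`. A non-abelian `G` is not cyclic, so `H = G`
is not among them, and it contributes `|Aut G| ≥ |Inn G| = |G / Z(G)| ≥ 4`: groups of order `≤ 3`
are cyclic, and `G / Z(G)` is not cyclic since `G` is not abelian.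
-/

/-- `S G` is the sum, over all subgroups `H` of `G`, of the number of
automorphisms of `H`. -/
noncomputable def S (G : Type*) [Group G] : ℕ :=
  ∑ᶠ H : Subgroup G, Nat.card (MulAut ↥H)

open Subgroup

theorem isCyclic_of_card_le_three {G : Type*} [Group G] [Finite G] (hG : Nat.card G ≤ 3) :
    IsCyclic G := by
  have := Nat.card_pos (α := G)
  interval_cases h : Nat.card G
  · exact isCyclic_of_card_dvd_prime (p := 2) (by rw [h]; norm_num)
  · exact isCyclic_of_card_dvd_prime (p := 2) (by rw [h])
  · exact isCyclic_of_card_dvd_prime (p := 3) (by rw [h])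

theorem MulAut.ker_conj (G : Type*) [Group G] :
    (MulAut.conj : G →* MulAut G).ker = center G := by
  ext x
  simp only [MonoidHom.mem_ker, MulEquiv.ext_iff, MulAut.conj_apply, MulAut.one_apply,
    mul_inv_eq_iff_eq_mul, mem_center_iff]
  exact forall_congr' fun _ => eq_comm

theorem zpowers_ne_top_of_not_isMulCommutative {G : Type*} [Group G] (hG : ¬ IsMulCommutative G)
    (g : G) : zpowers g ≠ ⊤ := by
  intro h
  have : IsCyclic G := isCyclic_iff_exists_zpowers_eq_top.mpr ⟨g, h⟩
  exact hG IsCyclic.isMulCommutative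

section

variable {G : Type*} [Group G] [Finite G]

theorem card_quotient_center_le_card_mulAut :
    Nat.card (G ⧸ center G) ≤ Nat.card (MulAut G) :=
  calc Nat.card (G ⧸ center G)
      = Nat.card (G ⧸ (MulAut.conj : G →* MulAut G).ker) :=
        Nat.card_congr (QuotientGroup.quotientMulEquivOfEq (MulAut.ker_conj G).symm).toEquiv
    _ ≤ Nat.card (MulAut G) := Nat.card_le_card_of_injective _ (QuotientGroup.kerLift_injective _)

theorem four_le_card_mulAut (hG : ¬ IsMulCommutative G) : 4 ≤ Nat.card (MulAut G) := by
  refine le_trans ?_ card_quotient_center_le_card_mulAut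
  by_contra! h
  have := isCyclic_of_card_le_three (Nat.le_of_lt_succ h)
  exact hG (isMulCommutative_of_isCyclic_quotient_center_self G)

theorem card_zpowers_eq_le_card_mulAut (H : Subgroup G) :
    Nat.card {g : G // zpowers g = H} ≤ Nat.card (MulAut H) := by
  classical
  rcases isEmpty_or_nonempty {g : G // zpowers g = H} with _ | ⟨g, rfl⟩
  · simp
  have : Fintype (zpowers g) := Fintype.ofFinite _
  rw [IsCyclic.card_mulAut, Nat.card_eq_fintype_card (α := zpowers g),
    ← IsCyclic.card_orderOf_eq_totient dvd_rfl, ← Fintype.card_subtype, ← Nat.card_eq_fintype_card]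
  refine Nat.card_le_card_of_injective
    (fun x => ⟨⟨x, x.2.le (mem_zpowers x.1)⟩, ?_⟩) fun x y hxy => ?_
  · rw [Subgroup.orderOf_mk, ← Nat.card_eq_fintype_card, ← Nat.card_zpowers, x.2]
  · exact Subtype.ext (congrArg (fun a : {a : zpowers g // _} => (a.1 : G)) hxy)

theorem card_eq_sum_card_zpowers_eq [Fintype (Subgroup G)] :
    Nat.card G = ∑ H : Subgroup G, Nat.card {g : G // zpowers g = H} := by
  rw [← Nat.card_sigma]
  exact Nat.card_congr (Equiv.sigmaFiberEquiv _).symm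

end

/-- For any finite non-abelian group `G`, `f(G) ≥ 1 + 4/|G|`, i.e. `S(G) ≥ |G| + 4`. -/
theorem stmt_7 (G : Type*) [Group G] [Finite G] (h : ¬ ∀ a b : G, a * b = b * a) :
    Nat.card G + 4 ≤ S G := by
  classical
  have : Fintype (Subgroup G) := Fintype.ofFinite _
  have hG : ¬ IsMulCommutative G := by rwa [isMulCommutative_iff]
  have hfiber_top : Nat.card {g : G // zpowers g = ⊤} = 0 :=
    @Nat.card_of_isEmpty _ ⟨fun g => zpowers_ne_top_of_not_isMulCommutative hG g g.2⟩
  have haut_top : 4 ≤ Nat.card (MulAut (⊤ : Subgroup G)) :=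
    (four_le_card_mulAut hG).trans_eq (Nat.card_congr (MulAut.congr topEquiv).toEquiv).symm
  rw [S, finsum_eq_sum_of_fintype, card_eq_sum_card_zpowers_eq,
    ← Finset.add_sum_erase _ _ (Finset.mem_univ ⊤), ← Finset.add_sum_erase _ _ (Finset.mem_univ ⊤),
    hfiber_top, zero_add, add_comm]
  gcongr with H
  exact card_zpowers_eq_le_card_mulAut H
end

section
/- Let p be a prime and let 1 ≤ n₁ ≤ n₂ be positive integers. Then |Aut(Z_{p^{n₁}} × Z_{p^{n₂}})| = (p−1)² · (p+1)^{⌊n₁/n₂⌋} · p^{3n₁ + n₂ − ⌊n₁/n₂⌋ − 2}, where ⌊n₁/n₂⌋ is the integer part of n₁/n₂ (which equals 1 if n₁ = n₂ and 0 otherwise). -/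
/-!
An endomorphism `f` of `G = ℤ/p^a × ℤ/p^b` (`1 ≤ a ≤ b`) is given by `x = f (1, 0)` and
`y = f (0, 1)` subject only to `p^a • x = 0`, so `|End G| = p^(3a+b)`. As `p` is nilpotent on
`G`, `f` is onto as soon as it is onto modulo `p G` (Nakayama), that is, iff the reductions of
`x` and `y` form a basis of `(ℤ/p)²`. Reduction modulo `p` is additive on `End G`, so all its
fibres have the same size. If `a = b` it maps onto `(ℤ/p)⁴` and `|Aut G| = p^(4a-4) |GL₂(𝔽_p)|`.
If `a < b` the reduction of `x` lies on the first axis, and `f` is an automorphism iff the first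
coordinate of `x` and the second coordinate of `y` are nonzero modulo `p`.
-/

open Function

theorem AddSubgroup.eq_top_of_forall_sub_nsmul_mem {G : Type*} [AddCommGroup G] {p k : ℕ}
    (hk : ∀ x : G, p ^ k • x = 0) {H : AddSubgroup G} (hH : ∀ x, ∃ y, x - p • y ∈ H) :
    H = ⊤ := by
  have hpow : ∀ j, ∀ x : G, ∃ y, x - p ^ j • y ∈ H := by
    intro j
    induction j with
    | zero => exact fun x => ⟨x, by simp⟩
    | succ j ih =>
      intro x
      obtain ⟨y, hy⟩ := ih x
      obtain ⟨z, hz⟩ := hH y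
      refine ⟨z, ?_⟩
      have : x - p ^ (j + 1) • z = (x - p ^ j • y) + p ^ j • (y - p • z) := by
        rw [smul_sub, smul_smul, ← pow_succ]
        abel
      rw [this]
      exact add_mem hy (AddSubgroup.nsmul_mem H hz _)
  refine eq_top_iff.mpr fun x _ => ?_
  obtain ⟨y, hy⟩ := hpow k x
  simpa [hk] using hy

theorem AddMonoidHom.surjective_iff_of_comp_eq {G V : Type*} [AddCommGroup G] [AddCommGroup V]
    {p k : ℕ} (hk : ∀ x : G, p ^ k • x = 0) {r : G →+ V} (hr : Surjective r)
    (hker : ∀ x, r x = 0 → ∃ y, x = p • y) {f : G →+ G} {L : V → V}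
    (hL : ∀ x, r (f x) = L (r x)) : Surjective f ↔ Surjective L := by
  constructor
  · intro hf
    have : Surjective (L ∘ r) := by
      rw [show L ∘ r = r ∘ f from funext fun x => (hL x).symm]
      exact hr.comp hf
    exact this.of_comp
  · intro hL'
    rw [← AddMonoidHom.range_eq_top]
    refine AddSubgroup.eq_top_of_forall_sub_nsmul_mem hk fun x => ?_
    obtain ⟨v, hv⟩ := hL' (r x)
    obtain ⟨w, rfl⟩ := hr v
    obtain ⟨y, hy⟩ := hker (x - f w) (by rw [map_sub, hL, hv, sub_self])
    exact ⟨y, by rw [← hy, sub_sub_cancel]; exact ⟨w, rfl⟩⟩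

theorem AddMonoidHom.card_subtype_comp_mul_card {A B : Type*} [AddGroup A] [AddGroup B]
    {φ : A →+ B} (hφ : Surjective φ) (P : B → Prop) :
    Nat.card {a // P (φ a)} * Nat.card B = Nat.card A * Nat.card {b // P b} := by
  let e := QuotientAddGroup.quotientKerEquivOfSurjective φ hφ
  have hpre : {a // P (φ a)} ≃ (QuotientAddGroup.mk (s := φ.ker)) ⁻¹' {q | P (e q)} :=
    Equiv.subtypeEquivRight fun _ => Iff.rfl
  have hS : {q : A ⧸ φ.ker | P (e q)} ≃ {b // P b} := e.toEquiv.subtypeEquiv fun _ => Iff.rfl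
  rw [Nat.card_congr (hpre.trans (QuotientAddGroup.preimageMkEquivAddSubgroupProdSet _ _)),
    Nat.card_prod, Nat.card_congr hS, ← φ.ker.card_mul_index, AddSubgroup.index,
    Nat.card_congr e.toEquiv]
  ring

noncomputable def AddAut.equivBijective (G : Type*) [AddGroup G] :
    AddAut G ≃ {f : G →+ G // Bijective f} where
  toFun e := ⟨e, e.bijective⟩
  invFun f := AddEquiv.ofBijective f.1 f.2
  left_inv e := by ext; rfl
  right_inv f := by ext; rfl

theorem AddAut.card_eq_card_surjective (G : Type*) [AddGroup G] [Finite G] :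
    Nat.card (AddAut G) = Nat.card {f : G →+ G // Surjective f} :=
  (Nat.card_congr (AddAut.equivBijective G)).trans <|
    Nat.card_congr <| Equiv.subtypeEquivRight fun _ => Finite.surjective_iff_bijective.symm

@[simps]
def AddMonoidHom.coprodEquiv (M N A : Type*) [AddZeroClass M] [AddZeroClass N]
    [AddCommMonoid A] : ((M →+ A) × (N →+ A)) ≃ (M × N →+ A) where
  toFun g := g.1.coprod g.2
  invFun f := (f.comp (AddMonoidHom.inl M N), f.comp (AddMonoidHom.inr M N))
  left_inv g := by ext <;> simp
  right_inv f := by ext; simp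

@[simps]
def Matrix.finTwoColsEquiv (R : Type*) : (R × R) × (R × R) ≃ Matrix (Fin 2) (Fin 2) R where
  toFun w := !![w.1.1, w.2.1; w.1.2, w.2.2]
  invFun M := ((M 0 0, M 1 0), (M 0 1, M 1 1))
  left_inv _ := rfl
  right_inv M := (Matrix.eta_fin_two M).symm

theorem surjective_smul_add_smul_iff_det_ne_zero {F : Type*} [Field F] (u v : F × F) :
    Surjective (fun c : F × F => c.1 • u + c.2 • v) ↔
      (Matrix.finTwoColsEquiv F (u, v)).det ≠ 0 := by
  have : (fun c : F × F => c.1 • u + c.2 • v) =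
      finTwoArrowEquiv F ∘ (Matrix.finTwoColsEquiv F (u, v)).mulVec ∘
        (finTwoArrowEquiv F).symm := by
    funext c
    ext <;> simp [Matrix.mulVec, dotProduct, Fin.sum_univ_two, mul_comm]
  rw [this, EquivLike.comp_surjective, EquivLike.surjective_comp,
    Matrix.mulVec_surjective_iff_isUnit, Matrix.isUnit_iff_isUnit_det, isUnit_iff_ne_zero]

theorem Matrix.card_det_ne_zero (K : Type*) [Field K] [Fintype K] (n : ℕ) :
    Nat.card {M : Matrix (Fin n) (Fin n) K // M.det ≠ 0} =
      ∏ i : Fin n, (Fintype.card K ^ n - Fintype.card K ^ (i : ℕ)) := by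
  rw [← Matrix.card_GL_field]
  exact Nat.card_congr
    { toFun M := GeneralLinearGroup.mkOfDetNeZero M.1 M.2
      invFun g := ⟨g, g.det_ne_zero⟩
      left_inv _ := rfl
      right_inv _ := Units.ext rfl }

namespace ZMod

section Hom

variable {A : Type*} [AddCommGroup A]

def addMonoidHomEquiv (n : ℕ) : (ZMod n →+ A) ≃ {x : A // n • x = 0} :=
  (ZMod.lift n).symm.trans <| (zmultiplesHom A).symm.subtypeEquiv fun f => by
    rw [zmultiplesHom_symm_apply, ← map_nsmul, nsmul_one]

@[simp]
theorem coe_addMonoidHomEquiv_apply (n : ℕ) (f : ZMod n →+ A) :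
    (addMonoidHomEquiv n f : A) = f 1 := by
  show f.comp (Int.castAddHom _) 1 = f 1
  simp

def prodAddMonoidHomEquiv (m n : ℕ) :
    (ZMod m × ZMod n →+ A) ≃ {x : A // m • x = 0} × {y : A // n • y = 0} :=
  (AddMonoidHom.coprodEquiv _ _ A).symm.trans
    ((addMonoidHomEquiv m).prodCongr (addMonoidHomEquiv n))

@[simp]
theorem coe_prodAddMonoidHomEquiv_fst (m n : ℕ) (f : ZMod m × ZMod n →+ A) :
    ((prodAddMonoidHomEquiv m n f).1 : A) = f (1, 0) := by
  simp [prodAddMonoidHomEquiv]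

@[simp]
theorem coe_prodAddMonoidHomEquiv_snd (m n : ℕ) (f : ZMod m × ZMod n →+ A) :
    ((prodAddMonoidHomEquiv m n f).2 : A) = f (0, 1) := by
  simp [prodAddMonoidHomEquiv]

@[simp]
theorem prodAddMonoidHomEquiv_symm_apply_one_zero (m n : ℕ)
    (xy : {x : A // m • x = 0} × {y : A // n • y = 0}) :
    (prodAddMonoidHomEquiv m n).symm xy (1, 0) = xy.1 := by
  rw [← coe_prodAddMonoidHomEquiv_fst, Equiv.apply_symm_apply]

@[simp]
theorem prodAddMonoidHomEquiv_symm_apply_zero_one (m n : ℕ)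
    (xy : {x : A // m • x = 0} × {y : A // n • y = 0}) :
    (prodAddMonoidHomEquiv m n).symm xy (0, 1) = xy.2 := by
  rw [← coe_prodAddMonoidHomEquiv_snd, Equiv.apply_symm_apply]

theorem card_addMonoidHom_prod (m n : ℕ) :
    Nat.card (ZMod m × ZMod n →+ A) =
      Nat.card {x : A // m • x = 0} * Nat.card {y : A // n • y = 0} := by
  rw [Nat.card_congr (prodAddMonoidHomEquiv m n), Nat.card_prod]

end Hom

theorem prod_nsmul_eq_zero_of_dvd {m n k : ℕ} (hm : m ∣ k) (hn : n ∣ k)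
    (x : ZMod m × ZMod n) : k • x = 0 := by
  ext <;> simp [nsmul_eq_mul, (ZMod.natCast_eq_zero_iff _ _).mpr, hm, hn]

theorem prod_eq_val_nsmul_add_val_nsmul {m n : ℕ} [NeZero m] [NeZero n] (x : ZMod m × ZMod n) :
    x = x.1.val • (1, 0) + x.2.val • (0, 1) := by
  ext <;> simp

theorem card_nsmul_eq_zero {n : ℕ} [NeZero n] (d : ℕ) :
    Nat.card {x : ZMod n // d • x = 0} = n.gcd d := by
  conv_rhs => rw [← Nat.card_zmod n, ← IsAddCyclic.card_nsmulAddMonoidHom_ker]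
  rfl

theorem card_prod_nsmul_eq_zero {m n : ℕ} [NeZero m] [NeZero n] (d : ℕ) :
    Nat.card {x : ZMod m × ZMod n // d • x = 0} = m.gcd d * n.gcd d := by
  rw [← card_nsmul_eq_zero, ← card_nsmul_eq_zero, ← Nat.card_prod,
    ← Nat.card_congr (Equiv.subtypeProdEquivProd (p := fun x : ZMod m => d • x = 0)
      (q := fun y : ZMod n => d • y = 0))]
  exact Nat.card_congr (Equiv.subtypeEquivRight fun x => Prod.ext_iff)

theorem card_addMonoidHom_prod_self (m n : ℕ) [NeZero m] [NeZero n] :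
    Nat.card (ZMod m × ZMod n →+ ZMod m × ZMod n) = m * n * m.gcd n ^ 2 := by
  rw [card_addMonoidHom_prod, card_prod_nsmul_eq_zero, card_prod_nsmul_eq_zero, Nat.gcd_self,
    Nat.gcd_self, Nat.gcd_comm n m]
  ring

theorem card_subtype_ne_zero (p : ℕ) [Fact p.Prime] :
    Nat.card {x : ZMod p // x ≠ 0} = p - 1 := by
  rw [← Nat.card_congr unitsEquivNeZero, Nat.card_eq_fintype_card, ZMod.card_units]

theorem card_det_finTwoColsEquiv_ne_zero (p : ℕ) [Fact p.Prime] :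
    Nat.card {w // (Matrix.finTwoColsEquiv (ZMod p) w).det ≠ 0} = (p - 1) ^ 2 * (p + 1) * p := by
  rw [Nat.card_congr ((Matrix.finTwoColsEquiv (ZMod p)).subtypeEquiv
      (q := fun M => M.det ≠ 0) fun _ => Iff.rfl),
    Matrix.card_det_ne_zero, Fin.prod_univ_two, ZMod.card, Fin.val_zero, Fin.val_one,
    pow_zero, pow_one]
  have h1 : 1 ≤ p := NeZero.pos p
  have h2 : 1 ≤ p ^ 2 := Nat.one_le_pow _ _ h1
  have h3 : p ≤ p ^ 2 := Nat.le_self_pow two_ne_zero p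
  zify [h1, h2, h3]
  ring

theorem exists_eq_nsmul_of_cast_eq_zero {m n : ℕ} [NeZero n] {x : ZMod n}
    (hx : (x.cast : ZMod m) = 0) : ∃ y, x = m • y := by
  rw [ZMod.cast_eq_val, ZMod.natCast_eq_zero_iff] at hx
  obtain ⟨k, hk⟩ := hx
  exact ⟨k, by rw [nsmul_eq_mul, ← Nat.cast_mul, ← hk, ZMod.natCast_zmod_val]⟩

theorem cast_eq_zero_of_pow_nsmul_eq_zero {p a b : ℕ} [Fact p.Prime] (hab : a < b)
    {x : ZMod (p ^ b)} (hx : p ^ a • x = 0) : (x.cast : ZMod p) = 0 := by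
  rw [ZMod.cast_eq_val, ZMod.natCast_eq_zero_iff]
  rw [← ZMod.natCast_zmod_val x, nsmul_eq_mul, ← Nat.cast_mul,
    ZMod.natCast_eq_zero_iff] at hx
  have : p ^ a * p ∣ p ^ a * x.val := (pow_succ p a ▸ pow_dvd_pow p hab).trans hx
  exact Nat.dvd_of_mul_dvd_mul_left (pow_pos (Fact.out : p.Prime).pos a) this

end ZMod

section PrimePowerProduct

variable (p : ℕ) {a b : ℕ} (ha : a ≠ 0) (hb : b ≠ 0)

def reduceModP : ZMod (p ^ a) × ZMod (p ^ b) →+ ZMod p × ZMod p :=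
  (ZMod.castHom (dvd_pow_self p ha) (ZMod p)).toAddMonoidHom.prodMap
    (ZMod.castHom (dvd_pow_self p hb) (ZMod p)).toAddMonoidHom

@[simp]
theorem reduceModP_apply (x : ZMod (p ^ a) × ZMod (p ^ b)) :
    reduceModP p ha hb x = (x.1.cast, x.2.cast) := rfl

theorem reduceModP_surjective : Surjective (reduceModP p ha hb) :=
  (ZMod.castHom_surjective (dvd_pow_self p ha)).prodMap
    (ZMod.castHom_surjective (dvd_pow_self p hb))

theorem exists_eq_nsmul_of_reduceModP_eq_zero [NeZero p] {x : ZMod (p ^ a) × ZMod (p ^ b)}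
    (hx : reduceModP p ha hb x = 0) : ∃ y, x = p • y := by
  obtain ⟨h₁, h₂⟩ := Prod.ext_iff.mp hx
  obtain ⟨y₁, hy₁⟩ := ZMod.exists_eq_nsmul_of_cast_eq_zero h₁
  obtain ⟨y₂, hy₂⟩ := ZMod.exists_eq_nsmul_of_cast_eq_zero h₂
  exact ⟨(y₁, y₂), Prod.ext hy₁ hy₂⟩

def reduceEnd : (ZMod (p ^ a) × ZMod (p ^ b) →+ ZMod (p ^ a) × ZMod (p ^ b)) →+
    (ZMod p × ZMod p) × (ZMod p × ZMod p) :=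
  ((reduceModP p ha hb).comp (AddMonoidHom.eval (1, 0))).prod
    ((reduceModP p ha hb).comp (AddMonoidHom.eval (0, 1)))

@[simp]
theorem reduceEnd_apply (f : ZMod (p ^ a) × ZMod (p ^ b) →+ ZMod (p ^ a) × ZMod (p ^ b)) :
    reduceEnd p ha hb f = (reduceModP p ha hb (f (1, 0)), reduceModP p ha hb (f (0, 1))) :=
  rfl

theorem surjective_iff_det_reduceEnd_ne_zero [Fact p.Prime]
    (f : ZMod (p ^ a) × ZMod (p ^ b) →+ ZMod (p ^ a) × ZMod (p ^ b)) :
    Surjective f ↔ (Matrix.finTwoColsEquiv (ZMod p) (reduceEnd p ha hb f)).det ≠ 0 := by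
  refine (AddMonoidHom.surjective_iff_of_comp_eq (k := a + b)
    (ZMod.prod_nsmul_eq_zero_of_dvd (pow_dvd_pow p (by omega)) (pow_dvd_pow p (by omega)))
    (reduceModP_surjective p ha hb) (fun x => exists_eq_nsmul_of_reduceModP_eq_zero p ha hb)
    fun x => ?_).trans (surjective_smul_add_smul_iff_det_ne_zero _ _)
  have hfx : f x = x.1.val • f (1, 0) + x.2.val • f (0, 1) := by
    conv_lhs => rw [ZMod.prod_eq_val_nsmul_add_val_nsmul x]
    rw [map_add, map_nsmul, map_nsmul]
  rw [hfx, map_add, map_nsmul, map_nsmul]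
  simp only [AddMonoidHom.comp_apply, AddMonoidHom.eval_apply_apply, reduceModP_apply,
    ZMod.cast_eq_val, Nat.cast_smul_eq_nsmul]

theorem card_addAut_eq_card_det_reduceEnd_ne_zero [Fact p.Prime] :
    Nat.card (AddAut (ZMod (p ^ a) × ZMod (p ^ b))) =
      Nat.card {f // (Matrix.finTwoColsEquiv (ZMod p) (reduceEnd p ha hb f)).det ≠ 0} := by
  rw [AddAut.card_eq_card_surjective]
  exact Nat.card_congr (Equiv.subtypeEquivRight (surjective_iff_det_reduceEnd_ne_zero p ha hb))

theorem reduceEnd_fst_snd_eq_zero [Fact p.Prime] (hab : a < b)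
    (f : ZMod (p ^ a) × ZMod (p ^ b) →+ ZMod (p ^ a) × ZMod (p ^ b)) :
    (reduceEnd p ha hb f).1.2 = 0 := by
  have h : p ^ a • f (1, 0) = 0 := by
    rw [← map_nsmul, ← map_zero f]
    congr 1
    ext <;> simp
  exact ZMod.cast_eq_zero_of_pow_nsmul_eq_zero hab (congrArg Prod.snd h)

theorem surjective_diag_reduceEnd [NeZero p] :
    Surjective (((AddMonoidHom.fst _ _).prodMap (AddMonoidHom.snd _ _)).comp
      (reduceEnd p ha hb)) := by
  rintro ⟨s, t⟩
  obtain ⟨x, hx⟩ := ZMod.castHom_surjective (dvd_pow_self p ha) s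
  obtain ⟨y, hy⟩ := ZMod.castHom_surjective (dvd_pow_self p hb) t
  rw [ZMod.castHom_apply] at hx hy
  exact ⟨(ZMod.prodAddMonoidHomEquiv (p ^ a) (p ^ b)).symm
    (⟨(x, 0), by simp⟩, ⟨(0, y), by simp⟩), by simp [hx, hy]⟩

theorem surjective_reduceEnd_self [NeZero p] : Surjective (reduceEnd p ha ha) := by
  rintro ⟨u, v⟩
  obtain ⟨x, rfl⟩ := reduceModP_surjective p ha ha u
  obtain ⟨y, rfl⟩ := reduceModP_surjective p ha ha v
  have hdvd : p ^ a ∣ p ^ a := dvd_rfl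
  exact ⟨(ZMod.prodAddMonoidHomEquiv (p ^ a) (p ^ a)).symm
    (⟨x, ZMod.prod_nsmul_eq_zero_of_dvd hdvd hdvd x⟩,
      ⟨y, ZMod.prod_nsmul_eq_zero_of_dvd hdvd hdvd y⟩), by simp⟩

end PrimePowerProduct

theorem card_addAut_of_lt (p : ℕ) [Fact p.Prime] {a b : ℕ} (ha : a ≠ 0) (hab : a < b) :
    Nat.card (AddAut (ZMod (p ^ a) × ZMod (p ^ b))) = (p - 1) ^ 2 * p ^ (3 * a + b - 2) := by
  have hb : b ≠ 0 := by omega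
  have hdet : ∀ f, (Matrix.finTwoColsEquiv (ZMod p) (reduceEnd p ha hb f)).det ≠ 0 ↔
      (reduceEnd p ha hb f).1.1 ≠ 0 ∧ (reduceEnd p ha hb f).2.2 ≠ 0 := by
    intro f
    rw [← mul_ne_zero_iff, Matrix.finTwoColsEquiv_apply, Matrix.det_fin_two_of,
      reduceEnd_fst_snd_eq_zero p ha hb hab f, mul_zero, sub_zero]
  have hunits : Nat.card {w : ZMod p × ZMod p // w.1 ≠ 0 ∧ w.2 ≠ 0} = (p - 1) ^ 2 := by
    rw [Nat.card_congr (Equiv.subtypeProdEquivProd (p := fun x : ZMod p => x ≠ 0)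
      (q := fun x : ZMod p => x ≠ 0)), Nat.card_prod, ZMod.card_subtype_ne_zero, sq]
  have hcount := AddMonoidHom.card_subtype_comp_mul_card
    (surjective_diag_reduceEnd p ha hb) fun w : ZMod p × ZMod p => w.1 ≠ 0 ∧ w.2 ≠ 0
  rw [hunits, ZMod.card_addMonoidHom_prod_self, Nat.card_prod, Nat.card_zmod,
    Nat.gcd_eq_left (pow_dvd_pow p hab.le)] at hcount
  rw [card_addAut_eq_card_det_reduceEnd_ne_zero p ha hb,
    Nat.card_congr (Equiv.subtypeEquivRight hdet)]
  have hp : 0 < p := NeZero.pos p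
  refine Nat.eq_of_mul_eq_mul_right (by positivity : 0 < p * p) (hcount.trans ?_)
  calc p ^ a * p ^ b * (p ^ a) ^ 2 * (p - 1) ^ 2 = (p - 1) ^ 2 * p ^ (3 * a + b) := by ring
    _ = (p - 1) ^ 2 * (p ^ (3 * a + b - 2) * p ^ 2) := by rw [pow_sub_mul_pow p (by omega)]
    _ = _ := by ring

theorem card_addAut_self (p : ℕ) [Fact p.Prime] {a : ℕ} (ha : a ≠ 0) :
    Nat.card (AddAut (ZMod (p ^ a) × ZMod (p ^ a))) =
      (p - 1) ^ 2 * (p + 1) * p ^ (4 * a - 3) := by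
  have hcount := AddMonoidHom.card_subtype_comp_mul_card (surjective_reduceEnd_self p ha)
    fun w => (Matrix.finTwoColsEquiv (ZMod p) w).det ≠ 0
  rw [ZMod.card_det_finTwoColsEquiv_ne_zero, ZMod.card_addMonoidHom_prod_self, Nat.card_prod,
    Nat.card_prod, Nat.card_zmod, Nat.gcd_self] at hcount
  rw [card_addAut_eq_card_det_reduceEnd_ne_zero p ha ha]
  have hp : 0 < p := NeZero.pos p
  refine Nat.eq_of_mul_eq_mul_right (by positivity : 0 < p * p * (p * p)) (hcount.trans ?_)
  calc p ^ a * p ^ a * (p ^ a) ^ 2 * ((p - 1) ^ 2 * (p + 1) * p)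
      = (p - 1) ^ 2 * (p + 1) * p * p ^ (4 * a) := by ring
    _ = (p - 1) ^ 2 * (p + 1) * p * (p ^ (4 * a - 3) * p ^ 3) := by
      rw [pow_sub_mul_pow p (by omega)]
    _ = _ := by ring

/-- Let `p` be a prime and `1 ≤ n₁ ≤ n₂`. Then
`|Aut(ℤ_{p^{n₁}} × ℤ_{p^{n₂}})| = (p−1)² (p+1)^{⌊n₁/n₂⌋} p^{3n₁ + n₂ − ⌊n₁/n₂⌋ − 2}`. -/
theorem stmt_13 (p : ℕ) (hp : p.Prime) (n₁ n₂ : ℕ) (h1 : 1 ≤ n₁) (h12 : n₁ ≤ n₂) :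
    Nat.card (AddAut (ZMod (p ^ n₁) × ZMod (p ^ n₂))) =
      (p - 1) ^ 2 * (p + 1) ^ (n₁ / n₂) * p ^ (3 * n₁ + n₂ - n₁ / n₂ - 2) := by
  have : Fact p.Prime := ⟨hp⟩
  rcases h12.lt_or_eq with hlt | rfl
  · rw [card_addAut_of_lt p (by omega) hlt, Nat.div_eq_of_lt hlt]
    simp
  · rw [card_addAut_self p (by omega), Nat.div_self (by omega), pow_one]
    congr 2
    omega
end
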